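/- arXiv:1210.3391 — 2 statements merged into one kernel-verified Lean document; each statement's English description precedes it below -/
import Mathlib

section
/- Let B be a normalized Hölder potential with Gibbs measure μ (L_B^* μ = μ), and A any Hölder potential. Then h(μ) + ∫ A dμ = inf over continuous positive functions u on M^ℕ of ∫ log(L_A u / u) dμ, where h(μ) = −∫ B dμ, and the infimum is attained at u = e^{−A+B}. -/
open MeasureTheory Filter Topology

noncomputable section

/-- Concatenation `ax` of a symbol `a ∈ M` with a sequence `x ∈ M^ℕ`. -/
def pcons {M : Type*} (a : M) (x : ℕ → M) : ℕ → M
  | 0 => a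
  | n + 1 => x n

/-- The left shift on `M^ℕ`. -/
def shiftMap {M : Type*} (x : ℕ → M) : ℕ → M := fun n => x (n + 1)

/-- The metric `d(x,y) = ∑_{n ≥ 1} 2^{-n} d_M(x_n, y_n)` on `M^ℕ`
(coordinates indexed from 0, so coordinate `n` has weight `2^{-(n+1)}`). -/
def dB {M : Type*} [MetricSpace M] (x y : ℕ → M) : ℝ :=
  ∑' n : ℕ, (1 / 2 : ℝ) ^ (n + 1) * dist (x n) (y n)

/-- `f : M^ℕ → ℝ` is `α`-Hölder with constant `C` (w.r.t. the metric `dB`). -/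
def HolderFWith {M : Type*} [MetricSpace M] (C α : ℝ) (f : (ℕ → M) → ℝ) : Prop :=
  Continuous f ∧ ∀ x y, |f x - f y| ≤ C * dB x y ^ α

/-- `f : M^ℕ → ℝ` is `α`-Hölder continuous. -/
def HolderF {M : Type*} [MetricSpace M] (α : ℝ) (f : (ℕ → M) → ℝ) : Prop :=
  ∃ C, 0 ≤ C ∧ HolderFWith C α f

/-- The Ruelle (transfer) operator with a-priori measure `ν` and potential `A`:
`L_A(φ)(x) = ∫_M e^{A(ax)} φ(ax) dν(a)`. -/
def Ruelle {M : Type*} [MetricSpace M] [MeasurableSpace M] (ν : Measure M)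
    (A : (ℕ → M) → ℝ) (φ : (ℕ → M) → ℝ) : (ℕ → M) → ℝ :=
  fun x => ∫ a, Real.exp (A (pcons a x)) * φ (pcons a x) ∂ν

/-- Any continuous real function on a compact space is integrable w.r.t. a finite measure. -/
lemma integrable_of_continuous_aux {X : Type*} [TopologicalSpace X] [CompactSpace X]
    [MeasurableSpace X] [OpensMeasurableSpace X] (μ : Measure X) [IsFiniteMeasure μ]
    {f : X → ℝ} (hf : Continuous f) : Integrable f μ :=
  hf.integrable_of_hasCompactSupport (IsClosed.isCompact (isClosed_tsupport f))

lemma pcons_cont {M : Type*} [MetricSpace M] (x : ℕ → M) :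
    Continuous fun a : M => pcons a x := by
  apply continuous_pi; intro n
  cases n with
  | zero => exact continuous_id
  | succ n => exact continuous_const

lemma pcons_cont2 {M : Type*} [MetricSpace M] :
    Continuous fun p : M × (ℕ → M) => pcons p.1 p.2 := by
  apply continuous_pi; intro n
  cases n with
  | zero => exact continuous_fst
  | succ n => exact (continuous_apply n).comp continuous_snd

lemma ruelle_cont {M : Type*} [MetricSpace M] [CompactSpace M] [Nonempty M]
    [MeasurableSpace M] [BorelSpace M] (ν : Measure M) [IsProbabilityMeasure ν]
    {A f : (ℕ → M) → ℝ} (hA : Continuous A) (hf : Continuous f) :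
    Continuous (Ruelle ν A f) := by
  have hGc : Continuous fun p : M × (ℕ → M) =>
      Real.exp (A (pcons p.1 p.2)) * f (pcons p.1 p.2) :=
    (Real.continuous_exp.comp (hA.comp pcons_cont2)).mul (hf.comp pcons_cont2)
  obtain ⟨C, hC⟩ := isCompact_univ.exists_bound_of_continuousOn hGc.continuousOn
  have hp₀' : ∀ (a : M) (x : ℕ → M), ‖Real.exp (A (pcons a x)) * f (pcons a x)‖ ≤ C :=
    fun a x => hC (a, x) (Set.mem_univ _)
  unfold Ruelle
  refine continuous_of_dominated
      (F := fun (x : ℕ → M) (a : M) => Real.exp (A (pcons a x)) * f (pcons a x))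
      (bound := fun _ => C)
      (fun x => ?_) (fun x => ?_) (integrable_const _) ?_
  · have hc : Continuous fun a : M => Real.exp (A (pcons a x)) * f (pcons a x) :=
      (Real.continuous_exp.comp (hA.comp (pcons_cont x))).mul (hf.comp (pcons_cont x))
    exact hc.aestronglyMeasurable
  · exact Eventually.of_forall fun a => by
      exact hp₀' a x
  · refine Eventually.of_forall fun a => ?_
    have hc1 : Continuous fun x : ℕ → M => pcons a x := by
      apply continuous_pi; intro n
      cases n with
      | zero => exact continuous_const
      | succ n => exact continuous_apply n
    exact (Real.continuous_exp.comp (hA.comp hc1)).mul (hf.comp hc1)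

/-- `h(μ) + ∫ A dμ` is the infimum over positive continuous `u` of
`∫ log (L_A u / u) dμ`, and the infimum is attained at `u = e^{−A+B}`. -/
theorem entropy_inf_formula {M : Type*} [MetricSpace M] [CompactSpace M] [Nonempty M]
    [MeasurableSpace M] [BorelSpace M]
    (ν : Measure M) [IsProbabilityMeasure ν]
    (hsupp : ∀ U : Set M, IsOpen U → U.Nonempty → 0 < ν U)
    {α : ℝ} (hα : 0 < α)
    (B : (ℕ → M) → ℝ) (hB : HolderF α B)
    (hnorm : ∀ x : ℕ → M, ∫ a, Real.exp (B (pcons a x)) ∂ν = 1)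
    (μ : Measure (ℕ → M)) [IsProbabilityMeasure μ]
    (hfix : ∀ ψ : (ℕ → M) → ℝ, Continuous ψ →
      ∫ x, Ruelle ν B ψ x ∂μ = ∫ x, ψ x ∂μ)
    (A : (ℕ → M) → ℝ) (hA : HolderF α A) :
    (∀ u : (ℕ → M) → ℝ, Continuous u → (∀ x, 0 < u x) →
        (-∫ x, B x ∂μ) + ∫ x, A x ∂μ ≤
          ∫ x, Real.log (Ruelle ν A u x / u x) ∂μ) ∧
      ∫ x, Real.log (Ruelle ν A (fun z => Real.exp (-A z + B z)) x /
          Real.exp (-A x + B x)) ∂μ = (-∫ x, B x ∂μ) + ∫ x, A x ∂μ := by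
  obtain ⟨CA, -, hAc, -⟩ := hA
  obtain ⟨CB, -, hBc, -⟩ := hB
  -- integrability helpers
  have intμ : ∀ {f : (ℕ → M) → ℝ}, Continuous f → Integrable f μ :=
    fun hf => integrable_of_continuous_aux μ hf
  have intν : ∀ {g : M → ℝ}, Continuous g → Integrable g ν :=
    fun hg => integrable_of_continuous_aux ν hg
  constructor
  · -- the inequality
    intro u hu hupos
    have hlogu : Continuous fun z => Real.log (u z) :=
      continuous_iff_continuousAt.2 fun z =>
        (Real.continuousAt_log (hupos z).ne').comp hu.continuousAt
    have hRc : Continuous (Ruelle ν A u) := ruelle_cont ν hAc hu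
    -- positivity of the Ruelle image
    have hpos : ∀ x, 0 < Ruelle ν A u x := by
      intro x
      have hint : Integrable (fun a => Real.exp (A (pcons a x)) * u (pcons a x)) ν :=
        intν ((Real.continuous_exp.comp (hAc.comp (pcons_cont x))).mul
          (hu.comp (pcons_cont x)))
      have hnn : (0 : M → ℝ) ≤ fun a => Real.exp (A (pcons a x)) * u (pcons a x) :=
        fun a => (mul_pos (Real.exp_pos _) (hupos _)).le
      refine (integral_pos_iff_support_of_nonneg hnn hint).2 ?_
      have : Function.support (fun a => Real.exp (A (pcons a x)) * u (pcons a x))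
          = Set.univ :=
        Set.eq_univ_of_forall fun a => (mul_pos (Real.exp_pos _) (hupos _)).ne'
      rw [this, measure_univ]
      norm_num
    have hhc : Continuous fun x => Real.log (Ruelle ν A u x) :=
      continuous_iff_continuousAt.2 fun x =>
        (Real.continuousAt_log (hpos x).ne').comp hRc.continuousAt
    set φ : (ℕ → M) → ℝ := fun z => A z - B z + Real.log (u z) with hφ
    have hφc : Continuous φ := (hAc.sub hBc).add hlogu
    -- the key pointwise (Jensen / tangent-line) estimate
    have step : ∀ x, Ruelle ν B φ x ≤ Real.log (Ruelle ν A u x) := by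
      intro x
      set c := Ruelle ν A u x with hcdef
      have hc : 0 < c := hpos x
      have hc1 : ∫ a, Real.exp (A (pcons a x)) * u (pcons a x) ∂ν = c := rfl
      have hcontA : Continuous fun a : M => Real.exp (A (pcons a x)) * u (pcons a x) :=
        (Real.continuous_exp.comp (hAc.comp (pcons_cont x))).mul (hu.comp (pcons_cont x))
      have hcontB : Continuous fun a : M => Real.exp (B (pcons a x)) :=
        Real.continuous_exp.comp (hBc.comp (pcons_cont x))
      have hcontφ : Continuous fun a : M => Real.exp (B (pcons a x)) * φ (pcons a x) :=
        hcontB.mul (hφc.comp (pcons_cont x))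
      have hptw : ∀ a : M, Real.exp (B (pcons a x)) * φ (pcons a x) ≤
          Real.exp (A (pcons a x)) * u (pcons a x) / c - Real.exp (B (pcons a x))
            + Real.exp (B (pcons a x)) * Real.log c := by
        intro a
        set p := pcons a x with hp
        have hup := hupos p
        have ht : 0 < Real.exp (A p - B p) * u p := mul_pos (Real.exp_pos _) hup
        have hlt : Real.log (Real.exp (A p - B p) * u p) ≤
            Real.log c + Real.exp (A p - B p) * u p / c - 1 := by
          have h1 := Real.log_le_sub_one_of_pos (div_pos ht hc)
          rw [Real.log_div ht.ne' hc.ne'] at h1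
          linarith
        have hlogt : Real.log (Real.exp (A p - B p) * u p) = φ p := by
          rw [hφ]
          rw [Real.log_mul (Real.exp_ne_zero _) hup.ne', Real.log_exp]
        have key : φ p ≤ Real.log c + Real.exp (A p - B p) * u p / c - 1 := by
          rw [← hlogt]; exact hlt
        have hmul := mul_le_mul_of_nonneg_left key (Real.exp_pos (B p)).le
        have hE : Real.exp (B p) * (Real.exp (A p - B p) * u p) = Real.exp (A p) * u p := by
          rw [← mul_assoc, ← Real.exp_add]
          have : B p + (A p - B p) = A p := by ring
          rw [this]
        have hring : Real.exp (B p) * (Real.log c + Real.exp (A p - B p) * u p / c - 1)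
            = Real.exp (B p) * (Real.exp (A p - B p) * u p) / c - Real.exp (B p)
              + Real.exp (B p) * Real.log c := by ring
        rw [hring, hE] at hmul
        exact hmul
      have hint1 : Integrable (fun a => Real.exp (B (pcons a x)) * φ (pcons a x)) ν :=
        intν hcontφ
      have iA' : Integrable (fun a => Real.exp (A (pcons a x)) * u (pcons a x) / c) ν :=
        (intν hcontA).div_const c
      have iB' : Integrable (fun a => Real.exp (B (pcons a x))) ν := intν hcontB
      have iS : Integrable (fun a => Real.exp (A (pcons a x)) * u (pcons a x) / c
          - Real.exp (B (pcons a x))) ν := iA'.sub iB'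
      have iL : Integrable (fun a => Real.exp (B (pcons a x)) * Real.log c) ν :=
        iB'.mul_const _
      have hint2 : Integrable (fun a =>
          Real.exp (A (pcons a x)) * u (pcons a x) / c - Real.exp (B (pcons a x))
            + Real.exp (B (pcons a x)) * Real.log c) ν := iS.add iL
      have hmono := integral_mono hint1 hint2 hptw
      have hval : ∫ a, (Real.exp (A (pcons a x)) * u (pcons a x) / c
          - Real.exp (B (pcons a x)) + Real.exp (B (pcons a x)) * Real.log c) ∂ν
          = Real.log c := by
        rw [integral_add iS iL, integral_sub iA' iB',
          integral_div, integral_mul_const, hc1, hnorm x, div_self hc.ne']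
        ring
      calc Ruelle ν B φ x = ∫ a, Real.exp (B (pcons a x)) * φ (pcons a x) ∂ν := rfl
        _ ≤ _ := hmono
        _ = Real.log c := hval
    have h1 : ∫ x, φ x ∂μ = ∫ x, Ruelle ν B φ x ∂μ := (hfix φ hφc).symm
    have h2 : ∫ x, Ruelle ν B φ x ∂μ ≤ ∫ x, Real.log (Ruelle ν A u x) ∂μ :=
      integral_mono (intμ (ruelle_cont ν hBc hφc)) (intμ hhc) step
    have h3 : ∫ x, Real.log (Ruelle ν A u x / u x) ∂μ
        = ∫ x, Real.log (Ruelle ν A u x) ∂μ - ∫ x, Real.log (u x) ∂μ := by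
      rw [← integral_sub (intμ hhc) (intμ hlogu)]
      exact integral_congr_ae (Eventually.of_forall fun x =>
        Real.log_div (hpos x).ne' (hupos x).ne')
    have h4 : ∫ x, φ x ∂μ
        = ∫ x, A x ∂μ - ∫ x, B x ∂μ + ∫ x, Real.log (u x) ∂μ := by
      have iab : Integrable (fun z => A z - B z) μ := (intμ hAc).sub (intμ hBc)
      have ilu : Integrable (fun z => Real.log (u z)) μ := intμ hlogu
      have e : ∫ x, φ x ∂μ = ∫ x, ((fun z => A z - B z) x + (fun z => Real.log (u z)) x) ∂μ :=
        rfl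
      rw [e, integral_add iab ilu, integral_sub (intμ hAc) (intμ hBc)]
    rw [h3]
    linarith
  · -- the equality at u = exp(-A+B)
    have e1 : ∀ x, Ruelle ν A (fun z => Real.exp (-A z + B z)) x = 1 := by
      intro x
      have hE : ∀ p : ℕ → M, Real.exp (A p) * Real.exp (-A p + B p) = Real.exp (B p) := by
        intro p
        rw [← Real.exp_add]
        have : A p + (-A p + B p) = B p := by ring
        rw [this]
      simp only [Ruelle, hE]
      exact hnorm x
    have e2 : ∀ x : ℕ → M, Real.log
        (Ruelle ν A (fun z => Real.exp (-A z + B z)) x / Real.exp (-A x + B x))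
        = A x - B x := by
      intro x
      rw [e1 x, one_div, Real.log_inv, Real.log_exp]
      ring
    calc ∫ x, Real.log (Ruelle ν A (fun z => Real.exp (-A z + B z)) x /
            Real.exp (-A x + B x)) ∂μ
        = ∫ x, (A x - B x) ∂μ :=
          integral_congr_ae (Eventually.of_forall e2)
      _ = (-∫ x, B x ∂μ) + ∫ x, A x ∂μ := by
          rw [integral_sub (intμ hAc) (intμ hBc)]; ring
end
end

section
/- Variational principle: for any Hölder continuous potential A on M^ℕ, log λ_A = sup over shift-invariant probabilities μ of [h(μ) + ∫ A dμ], and the supremum is attained at the Gibbs measure μ_A of the normalized potential Ā. -/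
open MeasureTheory Filter Topology

noncomputable section

/-- The entropy of an invariant measure: `h(μ) = inf_{A Hölder} { −∫ A dμ + log λ_A }`,
as an extended real number (it can be `−∞`). Here `lam A` denotes the maximal
eigenvalue of the Ruelle operator `L_A`. -/
def entropy {M : Type*} [MetricSpace M] [MeasurableSpace M]
    (α : ℝ) (lam : ((ℕ → M) → ℝ) → ℝ) (μ : Measure (ℕ → M)) : EReal :=
  ⨅ (A : (ℕ → M) → ℝ) (_ : HolderF α A),
    (((-∫ x, A x ∂μ) + Real.log (lam A) : ℝ) : EReal)

-- Auxiliary lemmas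

lemma continuous_shiftMap' {M : Type*} [MetricSpace M] :
    Continuous (shiftMap : (ℕ → M) → ℕ → M) :=
  continuous_pi fun n => continuous_apply (n + 1)

lemma continuous_pcons' {M : Type*} [MetricSpace M] (x : ℕ → M) :
    Continuous (fun a : M => pcons a x) := by
  apply continuous_pi
  intro n
  cases n with
  | zero => exact continuous_id
  | succ n => exact continuous_const

lemma shift_pcons {M : Type*} (a : M) (x : ℕ → M) : shiftMap (pcons a x) = x := rfl

lemma HolderF.continuous {M : Type*} [MetricSpace M] {α : ℝ} {f : (ℕ → M) → ℝ}
    (h : HolderF α f) : Continuous f := h.choose_spec.2.1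

lemma integrable_cont {X : Type*} [TopologicalSpace X] [CompactSpace X] [T2Space X]
    [MeasurableSpace X] [OpensMeasurableSpace X]
    {μ : Measure X} [IsFiniteMeasure μ] {f : X → ℝ} (hf : Continuous f) : Integrable f μ :=
  hf.integrable_of_hasCompactSupport (HasCompactSupport.of_compactSpace f)

/-- Normalization: `L_B̄ 1 = 1`. -/
lemma key_norm {M : Type*} [MetricSpace M] [CompactSpace M]
    [MeasurableSpace M] [BorelSpace M]
    (ν : Measure M) [IsProbabilityMeasure ν]
    {B ψ : (ℕ → M) → ℝ} {l : ℝ} (hl : 0 < l) (hψ : ∀ x, 0 < ψ x)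
    (heq : ∀ x, Ruelle ν B ψ x = l * ψ x) (x : ℕ → M) :
    ∫ a, Real.exp (B (pcons a x) + Real.log (ψ (pcons a x))
      - Real.log (ψ (shiftMap (pcons a x))) - Real.log l) ∂ν = 1 := by
  have h1 : ∀ a : M, Real.exp (B (pcons a x) + Real.log (ψ (pcons a x))
      - Real.log (ψ (shiftMap (pcons a x))) - Real.log l)
      = (Real.exp (B (pcons a x)) * ψ (pcons a x)) * (ψ x * l)⁻¹ := by
    intro a
    rw [shift_pcons, Real.exp_sub, Real.exp_sub, Real.exp_add,
      Real.exp_log (hψ (pcons a x)), Real.exp_log (hψ x), Real.exp_log hl]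
    field_simp
  simp only [h1]
  rw [integral_mul_const]
  have : ∫ a, Real.exp (B (pcons a x)) * ψ (pcons a x) ∂ν = l * ψ x := heq x
  rw [this]
  field_simp [(hψ x).ne', hl.ne']

/-- Variant of `key_norm` with `shiftMap (pcons a x)` reduced to `x`. -/
lemma key_norm' {M : Type*} [MetricSpace M] [CompactSpace M]
    [MeasurableSpace M] [BorelSpace M]
    (ν : Measure M) [IsProbabilityMeasure ν]
    {B ψ : (ℕ → M) → ℝ} {l : ℝ} (hl : 0 < l) (hψ : ∀ x, 0 < ψ x)
    (heq : ∀ x, Ruelle ν B ψ x = l * ψ x) (x : ℕ → M) :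
    ∫ a, Real.exp (B (pcons a x) + Real.log (ψ (pcons a x))
      - Real.log (ψ x) - Real.log l) ∂ν = 1 :=
  key_norm ν hl hψ heq x

/-- the variational principle `log λ_A = sup_μ { h(μ) + ∫ A dμ }`,
with the supremum attained at the Gibbs measure `μ_A` of the normalized potential. -/
theorem variational_principle {M : Type*} [MetricSpace M] [CompactSpace M] [Nonempty M]
    [MeasurableSpace M] [BorelSpace M]
    (ν : Measure M) [IsProbabilityMeasure ν]
    (hsupp : ∀ U : Set M, IsOpen U → U.Nonempty → 0 < ν U)
    {α : ℝ} (hα : 0 < α)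
    (lam : ((ℕ → M) → ℝ) → ℝ) (psi : ((ℕ → M) → ℝ) → (ℕ → M) → ℝ)
    (heig : ∀ A : (ℕ → M) → ℝ, HolderF α A → 0 < lam A ∧ HolderF α (psi A) ∧
      (∀ x, 0 < psi A x) ∧ ∀ x, Ruelle ν A (psi A) x = lam A * psi A x)
    (A : (ℕ → M) → ℝ) (hA : HolderF α A)
    (μA : Measure (ℕ → M)) [IsProbabilityMeasure μA]
    (hfix : ∀ g : (ℕ → M) → ℝ, Continuous g →
      ∫ x, Ruelle ν
          (fun z => A z + Real.log (psi A z) - Real.log (psi A (shiftMap z))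
            - Real.log (lam A)) g x ∂μA = ∫ x, g x ∂μA) :
    IsLUB {r : EReal | ∃ μ : Measure (ℕ → M), IsProbabilityMeasure μ ∧
        Measure.map shiftMap μ = μ ∧
        r = entropy α lam μ + ((∫ x, A x ∂μ : ℝ) : EReal)}
      ((Real.log (lam A) : ℝ) : EReal) ∧
    entropy α lam μA + ((∫ x, A x ∂μA : ℝ) : EReal) =
      ((Real.log (lam A) : ℝ) : EReal) := by
  obtain ⟨lA_pos, ψA_holder, ψA_pos, ψA_eig⟩ := heig A hA
  have contA : Continuous A := hA.continuous
  have contψA : Continuous (psi A) := ψA_holder.continuous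
  have contlogψA : Continuous fun z => Real.log (psi A z) :=
    contψA.log fun z => (ψA_pos z).ne'
  have contAbar : Continuous fun z => A z + Real.log (psi A z)
      - Real.log (psi A (shiftMap z)) - Real.log (lam A) := by
    exact ((contA.add contlogψA).sub (contlogψA.comp continuous_shiftMap')).sub continuous_const
  -- invariance of integrals under the shift
  have hginv : ∀ g : (ℕ → M) → ℝ, Continuous g →
      ∫ x, g (shiftMap x) ∂μA = ∫ x, g x ∂μA := by
    intro g hg
    have h := hfix (fun z => g (shiftMap z)) (hg.comp continuous_shiftMap')
    have h2 : ∀ x : ℕ → M, Ruelle ν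
        (fun z => A z + Real.log (psi A z) - Real.log (psi A (shiftMap z))
          - Real.log (lam A)) (fun z => g (shiftMap z)) x = g x := by
      intro x
      show ∫ a, Real.exp (A (pcons a x) + Real.log (psi A (pcons a x))
          - Real.log (psi A (shiftMap (pcons a x))) - Real.log (lam A))
          * g (shiftMap (pcons a x)) ∂ν = g x
      simp only [shift_pcons]
      rw [integral_mul_const, key_norm' ν lA_pos ψA_pos ψA_eig x, one_mul]
    simp only [h2] at h
    exact h.symm
  -- shift invariance of μA
  have hinv : Measure.map shiftMap μA = μA := by
    haveI : IsProbabilityMeasure (Measure.map shiftMap μA) :=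
      Measure.isProbabilityMeasure_map continuous_shiftMap'.measurable.aemeasurable
    apply ext_of_forall_lintegral_eq_of_IsFiniteMeasure
    intro f
    have hfc : Continuous fun x : ℕ → M => ((f x : NNReal) : ℝ) :=
      NNReal.continuous_coe.comp f.continuous
    rw [lintegral_map (f := fun x => ((f x : NNReal) : ENNReal))
        f.continuous.measurable.coe_nnreal_ennreal continuous_shiftMap'.measurable,
      lintegral_coe_eq_integral (fun x => f (shiftMap x))
        (integrable_cont (hfc.comp continuous_shiftMap')),
      lintegral_coe_eq_integral (fun x => f x) (integrable_cont hfc),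
      hginv (fun x => ((f x : NNReal) : ℝ)) hfc]
  -- the key inequality
  have hkey : ∀ B : (ℕ → M) → ℝ, HolderF α B →
      -∫ x, A x ∂μA + Real.log (lam A) ≤ -∫ x, B x ∂μA + Real.log (lam B) := by
    intro B hB
    obtain ⟨lB_pos, ψB_holder, ψB_pos, ψB_eig⟩ := heig B hB
    have contB : Continuous B := hB.continuous
    have contψB : Continuous (psi B) := ψB_holder.continuous
    have contlogψB : Continuous fun z => Real.log (psi B z) :=
      contψB.log fun z => (ψB_pos z).ne'
    have contBbar : Continuous fun z => B z + Real.log (psi B z)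
        - Real.log (psi B (shiftMap z)) - Real.log (lam B) :=
      ((contB.add contlogψB).sub (contlogψB.comp continuous_shiftMap')).sub continuous_const
    set Ab : (ℕ → M) → ℝ := fun z => A z + Real.log (psi A z)
      - Real.log (psi A (shiftMap z)) - Real.log (lam A) with hAb
    set Bb : (ℕ → M) → ℝ := fun z => B z + Real.log (psi B z)
      - Real.log (psi B (shiftMap z)) - Real.log (lam B) with hBb
    have contG : Continuous fun z => Bb z - Ab z := contBbar.sub contAbar
    have hnormA : ∀ x : ℕ → M, ∫ a, Real.exp (Ab (pcons a x)) ∂ν = 1 := fun x =>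
      key_norm ν lA_pos ψA_pos ψA_eig x
    have hnormB : ∀ x : ℕ → M, ∫ a, Real.exp (Bb (pcons a x)) ∂ν = 1 := fun x =>
      key_norm ν lB_pos ψB_pos ψB_eig x
    have h1 : ∀ x : ℕ → M, Ruelle ν Ab (fun z => Bb z - Ab z) x ≤ 0 := by
      intro x
      show ∫ a, Real.exp (Ab (pcons a x)) * (Bb (pcons a x) - Ab (pcons a x)) ∂ν ≤ 0
      have hle : ∀ a : M, Real.exp (Ab (pcons a x)) * (Bb (pcons a x) - Ab (pcons a x))
          ≤ Real.exp (Bb (pcons a x)) - Real.exp (Ab (pcons a x)) := by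
        intro a
        have h := Real.add_one_le_exp (Bb (pcons a x) - Ab (pcons a x))
        have hpos := Real.exp_pos (Ab (pcons a x))
        have he : Real.exp (Ab (pcons a x)) * Real.exp (Bb (pcons a x) - Ab (pcons a x))
            = Real.exp (Bb (pcons a x)) := by
          rw [← Real.exp_add]; ring_nf
        nlinarith
      have i1 : Integrable (fun a : M => Real.exp (Ab (pcons a x))
          * (Bb (pcons a x) - Ab (pcons a x))) ν := by
        apply integrable_cont
        exact ((Real.continuous_exp.comp (contAbar.comp (continuous_pcons' x))).mul
          (((contBbar.comp (continuous_pcons' x)).sub (contAbar.comp (continuous_pcons' x)))))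
      have i2 : Integrable (fun a : M => Real.exp (Bb (pcons a x))
          - Real.exp (Ab (pcons a x))) ν := by
        apply integrable_cont
        exact (Real.continuous_exp.comp (contBbar.comp (continuous_pcons' x))).sub
          (Real.continuous_exp.comp (contAbar.comp (continuous_pcons' x)))
      have i3 : Integrable (fun a : M => Real.exp (Bb (pcons a x))) ν :=
        integrable_cont (Real.continuous_exp.comp (contBbar.comp (continuous_pcons' x)))
      have i4 : Integrable (fun a : M => Real.exp (Ab (pcons a x))) ν :=
        integrable_cont (Real.continuous_exp.comp (contAbar.comp (continuous_pcons' x)))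
      calc ∫ a, Real.exp (Ab (pcons a x)) * (Bb (pcons a x) - Ab (pcons a x)) ∂ν
          ≤ ∫ a, (Real.exp (Bb (pcons a x)) - Real.exp (Ab (pcons a x))) ∂ν :=
            integral_mono i1 i2 hle
        _ = (∫ a, Real.exp (Bb (pcons a x)) ∂ν) - ∫ a, Real.exp (Ab (pcons a x)) ∂ν :=
            integral_sub i3 i4
        _ = 0 := by rw [hnormA x, hnormB x]; ring
    have h2 := hfix (fun z => Bb z - Ab z) contG
    have h3 : ∫ x, (Bb x - Ab x) ∂μA ≤ 0 := by
      rw [← h2]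
      exact integral_nonpos fun x => h1 x
    have iB : Integrable B μA := integrable_cont contB
    have iA : Integrable A μA := integrable_cont contA
    have ilB : Integrable (fun z => Real.log (psi B z)) μA := integrable_cont contlogψB
    have ilA : Integrable (fun z => Real.log (psi A z)) μA := integrable_cont contlogψA
    have ilBσ : Integrable (fun z : ℕ → M => Real.log (psi B (shiftMap z))) μA :=
      integrable_cont (contlogψB.comp continuous_shiftMap')
    have ilAσ : Integrable (fun z : ℕ → M => Real.log (psi A (shiftMap z))) μA :=
      integrable_cont (contlogψA.comp continuous_shiftMap')
    have hiB : ∫ x, Bb x ∂μA = ∫ x, B x ∂μA - Real.log (lam B) := by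
      have e0 : ∫ x, (B x + Real.log (psi B x) - Real.log (psi B (shiftMap x))
            - Real.log (lam B)) ∂μA
          = (∫ x, (B x + Real.log (psi B x) - Real.log (psi B (shiftMap x))) ∂μA)
            - ∫ _x, Real.log (lam B) ∂μA :=
        integral_sub ((iB.add ilB).sub ilBσ) (integrable_const _)
      have e1 : ∫ x, (B x + Real.log (psi B x) - Real.log (psi B (shiftMap x))) ∂μA
          = (∫ x, (B x + Real.log (psi B x)) ∂μA)
            - ∫ x, Real.log (psi B (shiftMap x)) ∂μA :=
        integral_sub (iB.add ilB) ilBσ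
      have e2 : ∫ x, (B x + Real.log (psi B x)) ∂μA
          = (∫ x, B x ∂μA) + ∫ x, Real.log (psi B x) ∂μA :=
        integral_add iB ilB
      calc ∫ x, Bb x ∂μA
          = ∫ x, (B x + Real.log (psi B x) - Real.log (psi B (shiftMap x))
              - Real.log (lam B)) ∂μA := rfl
        _ = ∫ x, B x ∂μA - Real.log (lam B) := by
            rw [e0, e1, e2, hginv (fun z => Real.log (psi B z)) contlogψB, integral_const]
            simp [measure_univ]
    have hiA : ∫ x, Ab x ∂μA = ∫ x, A x ∂μA - Real.log (lam A) := by
      have e0 : ∫ x, (A x + Real.log (psi A x) - Real.log (psi A (shiftMap x))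
            - Real.log (lam A)) ∂μA
          = (∫ x, (A x + Real.log (psi A x) - Real.log (psi A (shiftMap x))) ∂μA)
            - ∫ _x, Real.log (lam A) ∂μA :=
        integral_sub ((iA.add ilA).sub ilAσ) (integrable_const _)
      have e1 : ∫ x, (A x + Real.log (psi A x) - Real.log (psi A (shiftMap x))) ∂μA
          = (∫ x, (A x + Real.log (psi A x)) ∂μA)
            - ∫ x, Real.log (psi A (shiftMap x)) ∂μA :=
        integral_sub (iA.add ilA) ilAσ
      have e2 : ∫ x, (A x + Real.log (psi A x)) ∂μA
          = (∫ x, A x ∂μA) + ∫ x, Real.log (psi A x) ∂μA :=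
        integral_add iA ilA
      calc ∫ x, Ab x ∂μA
          = ∫ x, (A x + Real.log (psi A x) - Real.log (psi A (shiftMap x))
              - Real.log (lam A)) ∂μA := rfl
        _ = ∫ x, A x ∂μA - Real.log (lam A) := by
            rw [e0, e1, e2, hginv (fun z => Real.log (psi A z)) contlogψA, integral_const]
            simp [measure_univ]
    have iBb : Integrable Bb μA := integrable_cont contBbar
    have iAb : Integrable Ab μA := integrable_cont contAbar
    rw [integral_sub iBb iAb, hiB, hiA] at h3
    linarith
  -- entropy of μA
  have hattain : entropy α lam μA = (((-∫ x, A x ∂μA) + Real.log (lam A) : ℝ) : EReal) := by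
    apply le_antisymm
    · exact iInf₂_le A hA
    · refine le_iInf fun B => le_iInf fun hB => ?_
      exact_mod_cast hkey B hB
  have second : entropy α lam μA + ((∫ x, A x ∂μA : ℝ) : EReal)
      = ((Real.log (lam A) : ℝ) : EReal) := by
    rw [hattain, ← EReal.coe_add]
    exact EReal.coe_eq_coe_iff.mpr (by ring)
  refine ⟨⟨?_, fun b hb => hb ⟨μA, inferInstance, hinv, second.symm⟩⟩, second⟩
  rintro r ⟨μ, hμp, -, rfl⟩
  have h1 : entropy α lam μ ≤ (((-∫ x, A x ∂μ) + Real.log (lam A) : ℝ) : EReal) :=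
    iInf₂_le A hA
  calc entropy α lam μ + ((∫ x, A x ∂μ : ℝ) : EReal)
      ≤ (((-∫ x, A x ∂μ) + Real.log (lam A) : ℝ) : EReal) + ((∫ x, A x ∂μ : ℝ) : EReal) :=
        add_le_add_left h1 _
    _ = ((Real.log (lam A) : ℝ) : EReal) := by
        rw [← EReal.coe_add]; exact EReal.coe_eq_coe_iff.mpr (by ring)
end
end
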